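/- In a Blocksworld state s with a finite set of blocks and a target role O forming a forest (each block has at most one target block below it, and O is acyclic), if some block is misplaced, then there exists a lowest misplaced block: a misplaced block x such that the block y with (x,y) ∈ O is either absent (x should be on the table), or y is well-placed. -/

import Mathlib

/-- A block is well-placed (w.r.t. the state `onb`, where `onb x = some y` means
`x` is on `y` and `onb x = none` means `x` is on the table, and the functional
goal relation `O`, where `O x = some y` means the goal atom `on(x,y)` and
`O x = none` that `x` should be on the table): `x` is well-placed iff it has no
target and is on the table, or it is on its target `y` and `y` is well-placed. -/
inductive WellPlaced {Block : Type} (onb O : Block → Option Block) : Block → Prop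
  | table (x : Block) : O x = none → onb x = none → WellPlaced onb O x
  | on (x y : Block) : O x = some y → onb x = some y → WellPlaced onb O y →
      WellPlaced onb O x

/- Walk down the target chain from a misplaced block; since the chain cannot cycle among
finitely many blocks, it stops at a misplaced block whose target is absent or well-placed. -/

theorem Finite.wellFounded_of_acyclic {α : Type*} [Finite α] {r : α → α → Prop}
    (h : ∀ x, ¬ Relation.TransGen r x x) : WellFounded r :=
  have : Std.Irrefl (Relation.TransGen r) := ⟨h⟩
  Subrelation.wf Relation.TransGen.single (Finite.wellFounded_of_trans_of_irrefl _)

theorem exists_lowest_not_of_wellFounded {α : Type*} {f : α → Option α}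
    (hwf : WellFounded fun a b => f b = some a) {P : α → Prop} (h : ∃ x, ¬ P x) :
    ∃ x, ¬ P x ∧ (f x = none ∨ ∃ y, f x = some y ∧ P y) := by
  obtain ⟨x, hx, hmin⟩ := hwf.has_min {x | ¬ P x} h
  refine ⟨x, hx, ?_⟩
  rcases hfx : f x with _ | y
  · exact Or.inl rfl
  · exact Or.inr ⟨y, rfl, by_contra fun hy => hmin y hy hfx⟩

/-- in a Blocksworld state with finitely many blocks and an acyclic
functional target role `O` (a forest), if some block is misplaced then there is a
lowest misplaced block: a misplaced `x` whose target block is absent (`x` should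
be on the table) or well-placed. -/
theorem stmt7 {Block : Type} [Finite Block]
    (onb O : Block → Option Block)
    (hacyc : ∀ x : Block,
      ¬ Relation.TransGen (fun a b : Block => O a = some b) x x)
    (hmis : ∃ x : Block, ¬ WellPlaced onb O x) :
    ∃ x : Block, ¬ WellPlaced onb O x ∧
      (O x = none ∨ ∃ y : Block, O x = some y ∧ WellPlaced onb O y) := by
  have hwf : WellFounded fun a b => O b = some a :=
    Finite.wellFounded_of_acyclic fun x hx => hacyc x (Relation.transGen_swap.mp hx)
  exact exists_lowest_not_of_wellFounded hwf hmis
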